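/- arXiv:1707.01084 — 2 statements merged into one kernel-verified Lean document; each statement's English description precedes it below -/
import Mathlib

section
/- For every d > 0 there exist g ∈ L²(ℝ) and a uniformly discrete set Λ ⊂ ℝ² with upper Beurling density D⁺(Λ) > d such that the Gabor system G(g,Λ) is minimal in L²(ℝ). -/
/-!
Take the window `g = 𝟙_[0,1)` and `Λ = {(m, k/M) : k < M m}`. Gabor vectors at different
integer times have disjoint supports, hence are orthogonal. At a fixed time `m` they are
`t ↦ z(t)^k` on `[m, m+1)`, with `z(t) = exp(2πit/M)` injective there, so a vanishing finite
combination gives a polynomial with infinitely many roots: they are linearly independent.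
A system splitting into mutually orthogonal, finite, linearly independent blocks is minimal,
since projecting a vector off the rest of its block yields a biorthogonal functional.
The blocks are finite, yet the one at time `m` has `M m` points, so the cube of half-side `n`
centred at `(2n, n)` contains `M n²` points and `D⁺(Λ) ≥ M / 4`.
-/

open MeasureTheory Complex Filter
open scoped ENNReal

noncomputable section

/-- The Hilbert space `L²(ℝ)` of complex square-integrable functions. -/
abbrev SpaceL2 := Lp ℂ 2 (volume : Measure ℝ)

/-- The cube `Q_{(a,b)}(R)` with center `c = (a,b)` and side length `2R`. -/
def cube (c : ℝ × ℝ) (R : ℝ) : Set (ℝ × ℝ) :=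
  {p | |p.1 - c.1| ≤ R ∧ |p.2 - c.2| ≤ R}

/-- `Λ` is uniformly discrete with separation constant `δ`. -/
def UniformlyDiscreteWith (δ : ℝ) (Λ : Set (ℝ × ℝ)) : Prop :=
  ∀ x ∈ Λ, ∀ y ∈ Λ, x ≠ y → δ < dist x y

/-- `Λ` is uniformly discrete. -/
def UniformlyDiscrete (Λ : Set (ℝ × ℝ)) : Prop :=
  ∃ δ > 0, UniformlyDiscreteWith δ Λ

/-- The time-frequency shift `t ↦ e^{2πiμt} g(t - λ)` of `g` along `p = (λ, μ)`. -/
def gaborFn (g : ℝ → ℂ) (p : ℝ × ℝ) : ℝ → ℂ :=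
  fun t => Complex.exp (2 * Real.pi * Complex.I * p.2 * t) * g (t - p.1)

/-- The upper Beurling density
`D⁺(Λ) = lim_{R→∞} max_{(a,b)} |Λ ∩ Q_{(a,b)}(R)| / (2R)²` (as a `limsup`). -/
def upperDensity (Λ : Set (ℝ × ℝ)) : ℝ≥0∞ :=
  Filter.limsup
    (fun R : ℝ =>
      (⨆ c : ℝ × ℝ, ((Λ ∩ cube c R).ncard : ℝ≥0∞)) / ENNReal.ofReal ((2 * R) ^ 2))
    Filter.atTop

/-- A family of vectors is minimal: each vector lies outside the closed linear span of
the remaining vectors. -/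
def MinimalSystem {ι : Type*} (f : ι → SpaceL2) : Prop :=
  ∀ i : ι,
    f i ∉ closure ((Submodule.span ℂ (f '' {j | j ≠ i}) : Submodule ℂ SpaceL2) : Set SpaceL2)

section MinimalBlocks

variable {𝕜 E ι : Type*} [RCLike 𝕜] [NormedAddCommGroup E] [InnerProductSpace 𝕜 E]

theorem notMem_closure_span_of_inner_ne_zero {v : ι → E} {i : ι} {h : E}
    (hi : inner 𝕜 h (v i) ≠ 0) (hj : ∀ j ≠ i, inner 𝕜 h (v j) = 0) :
    v i ∉ closure (Submodule.span 𝕜 (v '' {j | j ≠ i}) : Set E) := by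
  have hspan : Submodule.span 𝕜 (v '' {j | j ≠ i}) ≤ (𝕜 ∙ h)ᗮ := by
    rw [Submodule.span_le]
    rintro _ ⟨j, hji, rfl⟩
    exact Submodule.mem_orthogonal_singleton_iff_inner_right.mpr (hj j hji)
  intro hcl
  exact hi (Submodule.mem_orthogonal_singleton_iff_inner_right.mp
    (closure_minimal hspan (Submodule.isClosed_orthogonal _) hcl))

theorem notMem_closure_span_of_finite_block {v : ι → E} {s : Set ι} {i : ι}
    (hs : s.Finite) (his : i ∈ s) (hi : v i ∉ Submodule.span 𝕜 (v '' (s \ {i})))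
    (horth : ∀ k ∈ s, ∀ j ∉ s, inner 𝕜 (v k) (v j) = 0) :
    v i ∉ closure (Submodule.span 𝕜 (v '' {j | j ≠ i}) : Set E) := by
  set W := Submodule.span 𝕜 (v '' (s \ {i}))
  have : FiniteDimensional 𝕜 W := FiniteDimensional.span_of_finite 𝕜 ((hs.sdiff).image v)
  -- `h` lies in the span of the block and is orthogonal to all of it except `v i`.
  set h := v i - W.starProjection (v i)
  have hW : h ∈ Wᗮ := W.sub_starProjection_mem_orthogonal (v i)
  have hblock : h ∈ Submodule.span 𝕜 (v '' s) :=
    sub_mem (Submodule.subset_span (Set.mem_image_of_mem v his))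
      (Submodule.span_mono (Set.image_mono Set.sdiff_subset) (W.starProjection_apply_mem (v i)))
  refine notMem_closure_span_of_inner_ne_zero (h := h) ?_ fun j hji => ?_
  · intro hhi
    have hh : inner 𝕜 h h = (0 : 𝕜) := by
      have hdecomp : v i = h + W.starProjection (v i) := (sub_add_cancel _ _).symm
      rw [hdecomp, inner_add_right,
        Submodule.inner_left_of_mem_orthogonal (W.starProjection_apply_mem (v i)) hW,
        add_zero] at hhi
      exact hhi
    exact hi (W.starProjection_eq_self_iff.mp (sub_eq_zero.mp (inner_self_eq_zero.mp hh)).symm)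
  · by_cases hjs : j ∈ s
    · exact Submodule.inner_left_of_mem_orthogonal
        (Submodule.subset_span (Set.mem_image_of_mem v (⟨hjs, hji⟩ : j ∈ s \ {i}))) hW
    · have : Submodule.span 𝕜 (v '' s) ≤ (𝕜 ∙ v j)ᗮ := by
        rw [Submodule.span_le]
        rintro _ ⟨k, hks, rfl⟩
        exact Submodule.mem_orthogonal_singleton_iff_inner_left.mpr (horth k hks j hjs)
      exact Submodule.mem_orthogonal_singleton_iff_inner_left.mp (this hblock)

end MinimalBlocks

theorem norm_gaborFn (g : ℝ → ℂ) (p : ℝ × ℝ) (t : ℝ) :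
    ‖gaborFn g p t‖ = ‖g (t - p.1)‖ := by
  rw [gaborFn, norm_mul, Complex.norm_exp]
  simp

theorem memLp_gaborFn {g : ℝ → ℂ} (hg : MemLp g 2 volume) (p : ℝ × ℝ) :
    MemLp (gaborFn g p) 2 volume := by
  have hshift := hg.comp_measurePreserving (measurePreserving_sub_right volume p.1)
  refine hshift.of_le ?_ (Eventually.of_forall fun t => (norm_gaborFn g p t).le)
  exact (Continuous.aestronglyMeasurable (by fun_prop)).mul hshift.1

theorem inner_toLp_eq_zero_of_ae_eq_zero_or {α 𝕜 E : Type*} [MeasurableSpace α] {μ : Measure α}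
    [RCLike 𝕜] [NormedAddCommGroup E] [InnerProductSpace 𝕜 E] {f g : α → E}
    (hf : MemLp f 2 μ) (hg : MemLp g 2 μ) (hfg : ∀ᵐ x ∂μ, f x = 0 ∨ g x = 0) :
    inner 𝕜 (hf.toLp f) (hg.toLp g) = 0 := by
  rw [L2.inner_def, ← integral_zero α 𝕜]
  refine integral_congr_ae ?_
  filter_upwards [hf.coeFn_toLp, hg.coeFn_toLp, hfg] with x hfx hgx hx
  rcases hx with hx | hx <;> simp [hfx, hgx, hx]

def boxWindow : ℝ → ℂ := (Set.Ico 0 1).indicator 1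

theorem memLp_boxWindow : MemLp boxWindow 2 volume :=
  memLp_indicator_const 2 measurableSet_Ico 1 (Or.inr (by simp))

def boxGabor (p : ℝ × ℝ) : SpaceL2 := (memLp_gaborFn memLp_boxWindow p).toLp

theorem gaborFn_boxWindow_eq_zero {p : ℝ × ℝ} {t : ℝ} (ht : t ∉ Set.Ico p.1 (p.1 + 1)) :
    gaborFn boxWindow p t = 0 := by
  have : t - p.1 ∉ Set.Ico 0 1 := fun h => ht ⟨by linarith [h.1], by linarith [h.2]⟩
  simp [gaborFn, boxWindow, this]

theorem inner_boxGabor_eq_zero {p q : ℝ × ℝ} (hpq : 1 ≤ |p.1 - q.1|) :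
    inner ℂ (boxGabor p) (boxGabor q) = 0 := by
  refine inner_toLp_eq_zero_of_ae_eq_zero_or _ _ (Eventually.of_forall fun t => ?_)
  by_cases hp : t ∈ Set.Ico p.1 (p.1 + 1)
  · refine Or.inr (gaborFn_boxWindow_eq_zero fun hq => ?_)
    exact absurd hpq (not_le.mpr (abs_sub_lt_iff.mpr
      ⟨by linarith [hp.1, hq.2], by linarith [hp.2, hq.1]⟩))
  · exact Or.inl (gaborFn_boxWindow_eq_zero hp)

theorem gaborFn_boxWindow_of_mem {T t : ℝ} (ht : t ∈ Set.Ico T (T + 1)) (M k : ℕ) :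
    gaborFn boxWindow (T, k / M) t = Complex.exp (2 * Real.pi * Complex.I * t / M) ^ k := by
  have : t - T ∈ Set.Ico 0 1 := ⟨by linarith [ht.1], by linarith [ht.2]⟩
  simp only [gaborFn, boxWindow, Set.indicator_of_mem this, Pi.one_apply, mul_one,
    ← Complex.exp_nat_mul]
  congr 1
  push_cast
  ring

theorem Polynomial.eq_zero_of_ae_isRoot {α R : Type*} [MeasurableSpace α] {μ : Measure α}
    [NullSingletonClass μ] [CommRing R] [IsDomain R] {P : Polynomial R} {z : α → R} {s : Set α}
    (hs : μ s ≠ 0) (hz : s.InjOn z) (hroot : ∀ᵐ x ∂μ, x ∈ s → P.IsRoot (z x)) : P = 0 := by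
  set A := {x ∈ s | P.IsRoot (z x)}
  have hA : A.Infinite := by
    intro hfin
    refine hs (measure_eq_zero_iff_ae_notMem.mpr ?_)
    filter_upwards [hroot, measure_eq_zero_iff_ae_notMem.mp (hfin.measure_zero μ)] with x hx hxA hxs
    exact hxA ⟨hxs, hx hxs⟩
  refine Polynomial.eq_zero_of_infinite_isRoot P ((hA.image (hz.mono fun x hx => hx.1)).mono ?_)
  rintro _ ⟨x, hx, rfl⟩
  exact hx.2

theorem injOn_cexp_div {M : ℕ} (hM : 0 < M) (T : ℝ) :
    (Set.Ico T (T + 1)).InjOn fun t : ℝ => Complex.exp (2 * Real.pi * Complex.I * t / M) := by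
  have hM' : (0 : ℝ) < M := Nat.cast_pos.mpr hM
  have hmem : ∀ t ∈ Set.Ico T (T + 1),
      2 * Real.pi * t / M ∈ Set.Ico (2 * Real.pi * T / M) (2 * Real.pi * (T + 1) / M) :=
    fun t ht => ⟨by gcongr; exact ht.1, by gcongr; exact ht.2⟩
  intro a ha b hb hab
  have hlen : 2 * Real.pi * (T + 1) / M - 2 * Real.pi * T / M ≤ 2 * Real.pi := by
    rw [← sub_div, div_le_iff₀ hM']
    nlinarith [Real.pi_pos, (Nat.one_le_cast (α := ℝ)).mpr hM]
  have := Circle.exp_injOn_Ico hlen (hmem a ha) (hmem b hb) (Circle.ext (by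
    simp only [Circle.coe_exp]
    convert hab using 2 <;> push_cast <;> ring))
  field_simp at this
  nlinarith [Real.pi_pos]

theorem linearIndependent_boxGabor {M : ℕ} (hM : 0 < M) (T : ℝ) :
    LinearIndependent ℂ fun k : ℕ => boxGabor (T, k / M) := by
  rw [linearIndependent_iff']
  intro s c hc k hk
  have hcomb : ∀ᵐ t ∂volume, ∑ k ∈ s, c k * gaborFn boxWindow (T, k / M) t = 0 := by
    have hterm : ∀ᵐ t ∂volume, ∀ k : ℕ, (c k • boxGabor (T, k / M) : SpaceL2) t
        = c k * gaborFn boxWindow (T, k / M) t := by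
      refine ae_all_iff.mpr fun k => ?_
      filter_upwards [Lp.coeFn_smul (c k) (boxGabor (T, k / M)),
        (memLp_gaborFn memLp_boxWindow (T, k / M)).coeFn_toLp] with t h1 h2
      rw [h1, Pi.smul_apply, boxGabor, h2, smul_eq_mul]
    filter_upwards [Lp.coeFn_fun_finsetSum s fun k => c k • boxGabor (T, k / M),
      Lp.coeFn_zero ℂ 2 volume, hterm] with t hsum hzero ht
    rw [← Finset.sum_congr rfl fun k _ => ht k, ← hsum, hc, hzero, Pi.zero_apply]
  have hP : ∑ j ∈ s, Polynomial.C (c j) * Polynomial.X ^ j = 0 := by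
    refine Polynomial.eq_zero_of_ae_isRoot (μ := volume) (s := Set.Ico T (T + 1))
      (z := fun t : ℝ => Complex.exp (2 * Real.pi * Complex.I * t / M)) (by simp)
      (injOn_cexp_div hM T) ?_
    filter_upwards [hcomb] with t ht hts
    simpa [Polynomial.eval_finsetSum, gaborFn_boxWindow_of_mem hts] using ht
  simpa [Polynomial.finsetSum_coeff, Polynomial.coeff_C_mul_X_pow, hk] using
    congrArg (Polynomial.coeff · k) hP

def latticePoint (M : ℕ) (q : ℕ × ℕ) : ℝ × ℝ := ((q.1 : ℝ), (q.2 : ℝ) / M)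

def gaborWedge (M : ℕ) : Set (ℝ × ℝ) := latticePoint M '' {q | q.2 < M * q.1}

theorem one_le_abs_fst_sub_of_mem_gaborWedge {M : ℕ} {x y : ℝ × ℝ} (hx : x ∈ gaborWedge M)
    (hy : y ∈ gaborWedge M) (hxy : x.1 ≠ y.1) : 1 ≤ |x.1 - y.1| := by
  obtain ⟨⟨m, k⟩, -, rfl⟩ := hx
  obtain ⟨⟨m', k'⟩, -, rfl⟩ := hy
  have hmm' : m ≠ m' := fun h => hxy (by simp [latticePoint, h])
  exact Nat.pairwise_one_le_dist hmm'

theorem uniformlyDiscreteWith_gaborWedge {M : ℕ} (hM : 0 < M) :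
    UniformlyDiscreteWith (1 / (2 * M)) (gaborWedge M) := by
  have hM' : (0 : ℝ) < M := Nat.cast_pos.mpr hM
  have hδ : 1 / (2 * M) < (1 / M : ℝ) := by gcongr; linarith
  rintro _ ⟨⟨m, k⟩, -, rfl⟩ _ ⟨⟨m', k'⟩, -, rfl⟩ hne
  simp only [latticePoint, Prod.dist_eq]
  by_cases hm : m = m'
  · subst hm
    have hk : k ≠ k' := fun h => hne (by rw [h])
    refine hδ.trans_le (le_max_of_le_right ?_)
    rw [Real.dist_eq, ← sub_div, abs_div, Nat.abs_cast, ← Real.dist_eq, Nat.dist_cast_real]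
    gcongr
    exact Nat.pairwise_one_le_dist hk
  · refine hδ.trans_le (le_max_of_le_left ?_)
    rw [Nat.dist_cast_real]
    exact (div_le_one hM').mpr (Nat.one_le_cast.mpr hM) |>.trans (Nat.pairwise_one_le_dist hm)

theorem finite_gaborWedge_inter_fst_le (M : ℕ) (t : ℝ) :
    {x ∈ gaborWedge M | x.1 ≤ t}.Finite := by
  refine (((Set.finite_Iic ⌊t⌋₊).prod (Set.finite_Iio (M * ⌊t⌋₊))).image
    (latticePoint M)).subset ?_
  rintro _ ⟨⟨⟨m, k⟩, hk, rfl⟩, hm⟩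
  have hm : m ≤ ⌊t⌋₊ := Nat.le_floor hm
  exact ⟨(m, k), ⟨hm, hk.trans_le (Nat.mul_le_mul_left M hm)⟩, rfl⟩

theorem le_ncard_gaborWedge_inter_cube {M : ℕ} (hM : 0 < M) (n : ℕ) :
    M * n ^ 2 ≤ (gaborWedge M ∩ cube (2 * n, n) n).ncard := by
  have hM' : (0 : ℝ) < M := Nat.cast_pos.mpr hM
  set S := Finset.Ico n (2 * n) ×ˢ Finset.range (M * n)
  have hf : (latticePoint M).Injective := by
    rintro ⟨m, k⟩ ⟨m', k'⟩ h
    simp only [latticePoint, Prod.mk.injEq, Nat.cast_inj, div_left_inj' hM'.ne'] at h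
    rw [h.1, h.2]
  have hsub : (S.image (latticePoint M) : Set (ℝ × ℝ)) ⊆ gaborWedge M ∩ cube (2 * n, n) n := by
    rintro _ hx
    obtain ⟨⟨m, k⟩, hq, rfl⟩ := Finset.mem_image.mp hx
    simp only [S, Finset.mem_product, Finset.mem_Ico, Finset.mem_range] at hq
    obtain ⟨⟨hnm, hm2n⟩, hk⟩ := hq
    refine ⟨⟨(m, k), hk.trans_le (Nat.mul_le_mul_left M hnm), rfl⟩, ?_, ?_⟩
    · have : (n : ℝ) ≤ m := by exact_mod_cast hnm
      have : (m : ℝ) < 2 * n := by exact_mod_cast hm2n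
      simp only [latticePoint]
      rw [abs_le]
      constructor <;> linarith
    · have : (k : ℝ) / M < n := by
        rw [div_lt_iff₀ hM']
        exact_mod_cast (by linarith : k < n * M)
      simp only [latticePoint]
      rw [abs_le]
      constructor <;> linarith [div_nonneg (Nat.cast_nonneg k) hM'.le]
  calc M * n ^ 2 = (S.image (latticePoint M)).card := by
        rw [Finset.card_image_of_injective _ hf, Finset.card_product, Nat.card_Ico,
          Finset.card_range, two_mul, Nat.add_sub_cancel]
        ring
    _ = (S.image (latticePoint M) : Set (ℝ × ℝ)).ncard := (Set.ncard_coe_finset _).symm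
    _ ≤ _ := Set.ncard_le_ncard hsub ((finite_gaborWedge_inter_fst_le M (3 * n)).subset
          fun x hx => ⟨hx.1, by linarith [(abs_le.mp hx.2.1).2]⟩)

theorem minimalSystem_boxGabor_gaborWedge {M : ℕ} (hM : 0 < M) :
    MinimalSystem fun p : gaborWedge M => boxGabor p := by
  intro p
  obtain ⟨⟨m, k⟩, -, hp⟩ := p.2
  have hpV : boxGabor p = boxGabor (m, k / M) := by rw [← hp]; rfl
  set s : Set (gaborWedge M) := {q | (q : ℝ × ℝ).1 = (p : ℝ × ℝ).1}
  have hfin : s.Finite :=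
    ((finite_gaborWedge_inter_fst_le M (p : ℝ × ℝ).1).preimage
      Subtype.val_injective.injOn).subset fun q hq => ⟨q.2, le_of_eq hq⟩
  have hps : p ∈ s := rfl
  have hsub : (fun q : gaborWedge M => boxGabor q) '' (s \ {p}) ⊆
      (fun j : ℕ => boxGabor (m, j / M)) '' {j | j ≠ k} := by
    rintro _ ⟨q, ⟨hqp, hqp'⟩, rfl⟩
    obtain ⟨⟨m', j⟩, -, hq⟩ := q.2
    have hm : m' = m := by
      simpa [s, ← hq, ← hp, latticePoint] using hqp
    subst hm
    refine ⟨j, fun hjk => hqp' (Subtype.ext ?_), by simp only [← hq]; rfl⟩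
    rw [← hq, ← hp, hjk]
  have hindep : boxGabor p ∉
      Submodule.span ℂ ((fun q : gaborWedge M => boxGabor q) '' (s \ {p})) := fun hmem =>
    (linearIndependent_boxGabor hM m).notMem_span_image (s := {j | j ≠ k}) (x := k) (by simp)
      (hpV ▸ Submodule.span_mono hsub hmem)
  have horth : ∀ q ∈ s, ∀ j ∉ s, inner ℂ (boxGabor q) (boxGabor j) = 0 :=
    fun q hq j hj => inner_boxGabor_eq_zero <| abs_sub_comm (q : ℝ × ℝ).1 (j : ℝ × ℝ).1 ▸
      one_le_abs_fst_sub_of_mem_gaborWedge j.2 q.2 fun h => hj (h.trans hq)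
  exact notMem_closure_span_of_finite_block hfin hps hindep horth

theorem ofReal_le_upperDensity {Λ : Set (ℝ × ℝ)} {a : ℝ}
    (h : ∀ n : ℕ, 0 < n → ∃ c, a * (2 * n) ^ 2 ≤ (Λ ∩ cube c n).ncard) :
    ENNReal.ofReal a ≤ upperDensity Λ := by
  refine Filter.le_limsup_of_frequently_le' (Filter.frequently_atTop.mpr fun R => ?_)
  set n := max 1 ⌈R⌉₊
  obtain ⟨c, hc⟩ := h n (by positivity)
  refine ⟨n, (Nat.le_ceil R).trans (by exact_mod_cast le_max_right _ _), ?_⟩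
  rw [ENNReal.le_div_iff_mul_le (Or.inl (ENNReal.ofReal_pos.mpr (by positivity)).ne')
    (Or.inl ENNReal.ofReal_ne_top), ← ENNReal.ofReal_mul' (by positivity)]
  calc ENNReal.ofReal (a * (2 * n) ^ 2)
      _ ≤ ENNReal.ofReal (Λ ∩ cube c n).ncard := ENNReal.ofReal_le_ofReal hc
      _ = (Λ ∩ cube c n).ncard := ENNReal.ofReal_natCast _
      _ ≤ ⨆ c : ℝ × ℝ, ((Λ ∩ cube c n).ncard : ℝ≥0∞) :=
        le_iSup (fun c : ℝ × ℝ => ((Λ ∩ cube c n).ncard : ℝ≥0∞)) c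

theorem ofReal_le_upperDensity_gaborWedge {M : ℕ} (hM : 0 < M) :
    ENNReal.ofReal (M / 4) ≤ upperDensity (gaborWedge M) :=
  ofReal_le_upperDensity fun n _ => ⟨(2 * n, n), by
    calc (M / 4 : ℝ) * (2 * n) ^ 2 = (M * n ^ 2 : ℕ) := by push_cast; ring
      _ ≤ _ := by exact_mod_cast le_ncard_gaborWedge_inter_cube hM n⟩

theorem exists_minimal_gabor_with_large_upperDensity_general (d : ℝ) :
    ∃ (g : ℝ → ℂ), MemLp g 2 (volume : Measure ℝ) ∧
    ∃ (Λ : Set (ℝ × ℝ)), UniformlyDiscrete Λ ∧ ENNReal.ofReal d < upperDensity Λ ∧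
    ∃ F : Λ → SpaceL2,
      (∀ p : Λ, (F p : ℝ → ℂ) =ᵐ[volume] gaborFn g (p : ℝ × ℝ)) ∧ MinimalSystem F := by
  set M := ⌊4 * d⌋₊ + 1
  have hM : 0 < M := Nat.succ_pos _
  have hdM : d < M / 4 := by
    have := Nat.lt_floor_add_one (4 * d)
    push_cast [M]
    linarith
  refine ⟨boxWindow, memLp_boxWindow, gaborWedge M,
    ⟨1 / (2 * M), by positivity, uniformlyDiscreteWith_gaborWedge hM⟩,
    ((ENNReal.ofReal_lt_ofReal_iff (by positivity)).mpr hdM).trans_le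
      (ofReal_le_upperDensity_gaborWedge hM),
    fun p => boxGabor p, fun p => (memLp_gaborFn memLp_boxWindow p).coeFn_toLp,
    minimalSystem_boxGabor_gaborWedge hM⟩

/-- **Theorem 2 (negative part).** For every `d > 0` there are `g ∈ L²(ℝ)` and a uniformly
discrete `Λ ⊂ ℝ²` with `D⁺(Λ) > d` such that the Gabor system `G(g,Λ)` is minimal. -/
theorem exists_minimal_gabor_with_large_upperDensity (d : ℝ) (hd : 0 < d) :
    ∃ (g : ℝ → ℂ), MemLp g 2 (volume : Measure ℝ) ∧
    ∃ (Λ : Set (ℝ × ℝ)), UniformlyDiscrete Λ ∧ ENNReal.ofReal d < upperDensity Λ ∧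
    ∃ F : Λ → SpaceL2,
      (∀ p : Λ, (F p : ℝ → ℂ) =ᵐ[volume] gaborFn g (p : ℝ × ℝ)) ∧ MinimalSystem F :=
  exists_minimal_gabor_with_large_upperDensity_general d
end
end

section
/- Let G ∈ L²(ℝ²) and for R > 1 define I_G(R) = ∫_{Q_0(R)} ∫_{Q_0^c(R+1/4)} |G(t−x, s−y)|² dt ds dx dy. Then I_G(R)/R² → 0 as R → ∞. -/
open MeasureTheory Complex Filter
open scoped ENNReal

noncomputable section

/-- `I_G(R) = ∫_{Q_0(R)} ∫_{Q_0^c(R+1/4)} |G(t-x, s-y)|² dt ds dx dy`. -/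
def IG (G : ℝ × ℝ → ℂ) (R : ℝ) : ℝ :=
  ∫ p in cube 0 R, (∫ q in (cube 0 (R + 1 / 4))ᶜ, ‖G (q.1 - p.1, q.2 - p.2)‖ ^ 2)

/-! With `f = ‖G‖²` integrable, a translation shows that the inner integral of `I_G(R)` at `p`
is at most the mass `T (R + 1/4 - ‖p‖)` of `f` outside the sup-norm ball of radius
`R + 1/4 - ‖p‖`. Substituting `p = R • v` bounds `I_G(R) / R²` by
`∫_{‖v‖ ≤ 1} T (R (1 - ‖v‖) + 1/4) dv`, whose integrand is at most `‖f‖₁` and tends to `0`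
off the null sphere `‖v‖ = 1`; dominated convergence concludes. -/

open Metric Set

namespace MeasureTheory

section Tail

variable {E : Type*} [NormedAddCommGroup E] [MeasurableSpace E]
  {μ : Measure E} {f : E → ℝ}

def tailIntegral (μ : Measure E) (f : E → ℝ) (r : ℝ) : ℝ :=
  ∫ x in (closedBall 0 r)ᶜ, f x ∂μ

theorem norm_tailIntegral_le_integral (hf : 0 ≤ f) (hfi : Integrable f μ) (r : ℝ) :
    ‖tailIntegral μ f r‖ ≤ ∫ x, f x ∂μ := by
  rw [tailIntegral, Real.norm_of_nonneg (setIntegral_nonneg_of_ae_restrict (.of_forall hf))]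
  exact setIntegral_le_integral hfi (.of_forall hf)

theorem antitone_tailIntegral (hf : 0 ≤ f) (hfi : Integrable f μ) :
    Antitone (tailIntegral μ f) := fun _ _ hrs =>
  setIntegral_mono_set hfi.integrableOn (.of_forall hf)
    (.of_forall (compl_subset_compl.2 (closedBall_subset_closedBall hrs)))

theorem tendsto_tailIntegral_atTop [OpensMeasurableSpace E] (hfi : Integrable f μ) :
    Tendsto (tailIntegral μ f) atTop (nhds 0) := by
  have hlim := tendsto_setIntegral_of_antitone (μ := μ) (f := f)
    (s := fun r : ℝ => (closedBall (0 : E) r)ᶜ) (fun _ => isClosed_closedBall.measurableSet.compl)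
    (fun _ _ hrs => compl_subset_compl.2 (closedBall_subset_closedBall hrs))
    ⟨0, hfi.integrableOn⟩
  have hempty : ⋂ r : ℝ, (closedBall (0 : E) r)ᶜ = ∅ := by
    refine eq_empty_of_forall_notMem fun x hx => ?_
    simpa using mem_iInter.1 hx ‖x‖
  rwa [hempty, setIntegral_empty] at hlim

/-- A translate by `p` of the region outside the ball of radius `r` lies outside the ball of
radius `r - ‖p‖`. -/
theorem setIntegral_compl_closedBall_comp_sub_le [OpensMeasurableSpace E] [MeasurableAdd E]
    [μ.IsAddRightInvariant] (hf : 0 ≤ f) (hfi : Integrable f μ) (r : ℝ) (p : E) :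
    ∫ q in (closedBall 0 r)ᶜ, f (q - p) ∂μ ≤ tailIntegral μ f (r - ‖p‖) := by
  set g := (closedBall (0 : E) (r - ‖p‖))ᶜ.indicator f
  have hg : MeasurableSet (closedBall (0 : E) (r - ‖p‖))ᶜ :=
    isClosed_closedBall.measurableSet.compl
  calc ∫ q in (closedBall 0 r)ᶜ, f (q - p) ∂μ
      = ∫ q in (closedBall 0 r)ᶜ, g (q - p) ∂μ := by
        refine setIntegral_congr_fun isClosed_closedBall.measurableSet.compl fun q hq => ?_
        have : r - ‖p‖ < ‖q - p‖ := by
          have := norm_sub_norm_le q p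
          simp only [mem_compl_iff, mem_closedBall, dist_zero_right, not_le] at hq
          linarith
        exact (indicator_of_mem (by simpa using this) f).symm
    _ ≤ ∫ q, g (q - p) ∂μ :=
        setIntegral_le_integral ((hfi.indicator hg).comp_sub_right p)
          (.of_forall fun _ => indicator_nonneg (fun x _ => hf x) _)
    _ = tailIntegral μ f (r - ‖p‖) := by
        rw [integral_sub_right_eq_self, integral_indicator hg, tailIntegral]

theorem setIntegral_closedBall_setIntegral_compl_closedBall_comp_sub_le [ProperSpace E]
    [OpensMeasurableSpace E] [MeasurableAdd E] [IsFiniteMeasureOnCompacts μ]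
    [μ.IsAddRightInvariant] (hf : 0 ≤ f) (hfi : Integrable f μ) (r s : ℝ) :
    ∫ p in closedBall 0 r, ∫ q in (closedBall 0 s)ᶜ, f (q - p) ∂μ ∂μ ≤
      ∫ p in closedBall 0 r, tailIntegral μ f (s - ‖p‖) ∂μ := by
  refine integral_mono_of_nonneg
    (.of_forall fun p => setIntegral_nonneg_of_ae_restrict (.of_forall fun q => hf (q - p))) ?_
    (.of_forall fun p => setIntegral_compl_closedBall_comp_sub_le hf hfi s p)
  refine Measure.integrableOn_of_bounded (M := ∫ x, f x ∂μ) measure_closedBall_lt_top.ne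
    ((antitone_tailIntegral hf hfi).measurable.comp (by fun_prop)).aestronglyMeasurable
    (.of_forall fun p => ?_)
  exact norm_tailIntegral_le_integral hf hfi _

end Tail

section Rescaling

open Topology Module

variable {E : Type*} [NormedAddCommGroup E] [NormedSpace ℝ E] [FiniteDimensional ℝ E]
  [MeasurableSpace E] [BorelSpace E] [Nontrivial E] {μ : Measure E} [μ.IsAddHaarMeasure]
  {f : E → ℝ}

theorem tendsto_setIntegral_closedBall_tailIntegral_div_pow (hf : 0 ≤ f) (hfi : Integrable f μ)
    (a : ℝ) :
    Tendsto (fun R => (∫ p in closedBall 0 R, tailIntegral μ f (R + a - ‖p‖) ∂μ) /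
      R ^ finrank ℝ E) atTop (𝓝 0) := by
  set T := tailIntegral μ f
  have hrescale : ∀ᶠ R in atTop, ∫ v in closedBall 0 1, T (R * (1 - ‖v‖) + a) ∂μ =
      (∫ p in closedBall 0 R, T (R + a - ‖p‖) ∂μ) / R ^ finrank ℝ E := by
    filter_upwards [eventually_gt_atTop 0] with R hR
    rw [← smul_unitClosedBall_of_nonneg hR.le, div_eq_inv_mul, ← smul_eq_mul,
      ← Measure.setIntegral_comp_smul_of_pos μ _ _ hR]
    refine setIntegral_congr_fun measurableSet_closedBall fun v _ => ?_
    rw [norm_smul, Real.norm_of_nonneg hR.le]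
    ring_nf
  refine Tendsto.congr' hrescale ?_
  have hlim : ∀ᵐ v ∂μ.restrict (closedBall 0 1),
      Tendsto (fun R => T (R * (1 - ‖v‖) + a)) atTop (𝓝 0) := by
    have hsphere : ∀ᵐ v ∂μ, v ∉ sphere (0 : E) 1 :=
      measure_eq_zero_iff_ae_notMem.1 (μ.addHaar_sphere 0 1)
    filter_upwards [ae_restrict_mem measurableSet_closedBall, ae_restrict_of_ae hsphere]
      with v hv hv'
    have : ‖v‖ < 1 := lt_of_le_of_ne (mem_closedBall_zero_iff.1 hv) (by simpa using hv')
    exact (tendsto_tailIntegral_atTop hfi).comp (tendsto_atTop_add_const_right _ a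
      (tendsto_id.atTop_mul_const (sub_pos.2 this)))
  have hT : Measurable T := (antitone_tailIntegral hf hfi).measurable
  simpa using tendsto_integral_filter_of_dominated_convergence (fun _ => ∫ x, f x ∂μ)
    (.of_forall fun R => (hT.comp (by fun_prop)).aestronglyMeasurable)
    (.of_forall fun R => .of_forall fun v => norm_tailIntegral_le_integral hf hfi _)
    (integrableOn_const measure_closedBall_lt_top.ne) hlim

end Rescaling

end MeasureTheory

theorem cube_zero_eq_closedBall (r : ℝ) : cube 0 r = closedBall 0 r := by
  ext p
  simp [cube, Prod.norm_def]

theorem IG_nonneg (G : ℝ × ℝ → ℂ) (R : ℝ) : 0 ≤ IG G R :=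
  setIntegral_nonneg_of_ae_restrict (.of_forall fun _ =>
    setIntegral_nonneg_of_ae_restrict (.of_forall fun _ => by positivity))

/-- **Lemma 8.** For `G ∈ L²(ℝ²)`, `I_G(R)/R² → 0` as `R → ∞`. -/
theorem IG_div_sq_tendsto_zero
    (G : ℝ × ℝ → ℂ) (hG : MemLp G 2 (volume : Measure (ℝ × ℝ))) :
    Tendsto (fun R : ℝ => IG G R / R ^ 2) atTop (nhds 0) := by
  set f : ℝ × ℝ → ℝ := fun u => ‖G u‖ ^ 2
  have hf : 0 ≤ f := fun u => by positivity
  have hfi : Integrable f := hG.integrable_norm_pow two_ne_zero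
  have hIG : ∀ R, IG G R =
      ∫ p in closedBall 0 R, ∫ q in (closedBall 0 (R + 1 / 4))ᶜ, f (q - p) := by
    intro R
    simp only [IG, cube_zero_eq_closedBall]
    rfl
  have hbound := tendsto_setIntegral_closedBall_tailIntegral_div_pow hf hfi (1 / 4)
  simp only [Module.finrank_prod, Module.finrank_self] at hbound
  refine tendsto_of_tendsto_of_tendsto_of_le_of_le tendsto_const_nhds hbound (fun R => ?_)
    (fun R => ?_)
  · exact div_nonneg (IG_nonneg G R) (sq_nonneg R)
  · rw [hIG]
    exact div_le_div_of_nonneg_right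
      (setIntegral_closedBall_setIntegral_compl_closedBall_comp_sub_le hf hfi R (R + 1 / 4))
      (sq_nonneg R)
end
end
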